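/- Let n ≥ 1 and k ∈ ℝ. Let C_1, …, C_n ∈ ℝ and T(t) = t^{n−1} + C_2·t^{n−2} + ⋯ + C_n. Let I be an open interval, F a differentiable function on I with F'(t) = T(t), and suppose k·F(t) + C_1 ≠ 0 and T(t) ≠ 0 on I. Then the function u(t) = T(t)/(k·F(t) + C_1) is a nonvanishing solution of the nth-order Riccati chain equation R_n[u] = 0 on I. -/
import Mathlib


/-- The Riccati chain: `R_0[u] = u`, `R_{j+1}[u] = (R_j[u])' + k·u·R_j[u]`. -/
noncomputable def chainR (k : ℝ) (u : ℝ → ℝ) : ℕ → ℝ → ℝ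
  | 0 => u
  | j + 1 => fun t => deriv (chainR k u j) t + k * u t * chainR k u j t

lemma chainR_eq_aux (k : ℝ) (I : Set ℝ) (hIopen : IsOpen I)
    (P : Polynomial ℝ) (F : ℝ → ℝ)
    (hF : ∀ t ∈ I, HasDerivAt F (P.eval t) t)
    (C1 : ℝ) (hden : ∀ t ∈ I, k * F t + C1 ≠ 0)
    (u : ℝ → ℝ) (hu : ∀ t, u t = P.eval t / (k * F t + C1)) :
    ∀ j, ∀ t ∈ I, chainR k u j t =
      (Polynomial.derivative^[j] P).eval t / (k * F t + C1) := by
  intro j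
  induction j with
  | zero => intro t ht; simp [chainR, hu]
  | succ j ih =>
    intro t ht
    have hwd : HasDerivAt (fun s => k * F s + C1) (k * P.eval t) t :=
      ((hF t ht).const_mul k).add_const C1
    have hQ : HasDerivAt (fun s => (Polynomial.derivative^[j] P).eval s)
        ((Polynomial.derivative^[j+1] P).eval t) t := by
      have := (Polynomial.derivative^[j] P).hasDerivAt t
      simpa [Function.iterate_succ_apply'] using this
    have hgd : HasDerivAt
        (fun s => (Polynomial.derivative^[j] P).eval s / (k * F s + C1))
        (((Polynomial.derivative^[j+1] P).eval t * (k * F t + C1) -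
          (Polynomial.derivative^[j] P).eval t * (k * P.eval t)) / (k * F t + C1) ^ 2) t :=
      hQ.div hwd (hden t ht)
    have hloc : chainR k u j =ᶠ[nhds t]
        fun s => (Polynomial.derivative^[j] P).eval s / (k * F s + C1) := by
      filter_upwards [hIopen.mem_nhds ht] with s hs using ih s hs
    have hderiv : deriv (chainR k u j) t =
        ((Polynomial.derivative^[j+1] P).eval t * (k * F t + C1) -
          (Polynomial.derivative^[j] P).eval t * (k * P.eval t)) / (k * F t + C1) ^ 2 := by
      rw [hloc.deriv_eq, hgd.deriv]
    show deriv (chainR k u j) t + k * u t * chainR k u j t = _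
    rw [hderiv, ih t ht, hu t]
    have hw := hden t ht
    field_simp
    ring

theorem general_solution_of_riccati_chain
    (n : ℕ) (hn : 1 ≤ n) (k : ℝ)
    (C : ℕ → ℝ)
    (T : ℝ → ℝ)
    (hT : ∀ t, T t = t ^ (n - 1) + ∑ r ∈ Finset.Icc 2 n, C r * t ^ (n - r))
    (I : Set ℝ) (hIopen : IsOpen I) (hIconn : I.OrdConnected)
    (F : ℝ → ℝ) (hF : ∀ t ∈ I, HasDerivAt F (T t) t)
    (hden : ∀ t ∈ I, k * F t + C 1 ≠ 0)
    (hT0 : ∀ t ∈ I, T t ≠ 0)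
    (u : ℝ → ℝ) (hu : ∀ t, u t = T t / (k * F t + C 1)) :
    (∀ t ∈ I, u t ≠ 0) ∧ (∀ t ∈ I, chainR k u n t = 0) := by
  classical
  set P : Polynomial ℝ :=
    Polynomial.X ^ (n - 1) + ∑ r ∈ Finset.Icc 2 n, C r • Polynomial.X ^ (n - r) with hP
  have hPeval : ∀ t, P.eval t = T t := by
    intro t
    simp [hP, hT t, Polynomial.eval_finset_sum]
  have hdeg : P.natDegree < n := by
    have h1 : (Polynomial.X ^ (n - 1) : Polynomial ℝ).natDegree ≤ n - 1 := by
      simp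
    have h2 : (∑ r ∈ Finset.Icc 2 n, C r • (Polynomial.X : Polynomial ℝ) ^ (n - r)).natDegree
        ≤ n - 1 := by
      apply Polynomial.natDegree_sum_le_of_forall_le
      intro r hr
      have hr2 : 2 ≤ r := (Finset.mem_Icc.mp hr).1
      calc (C r • (Polynomial.X : Polynomial ℝ) ^ (n - r)).natDegree
          ≤ ((Polynomial.X : Polynomial ℝ) ^ (n - r)).natDegree :=
            Polynomial.natDegree_smul_le _ _
        _ ≤ n - r := by simp
        _ ≤ n - 1 := by omega
    have := Polynomial.natDegree_add_le (Polynomial.X ^ (n - 1) : Polynomial ℝ)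
        (∑ r ∈ Finset.Icc 2 n, C r • (Polynomial.X : Polynomial ℝ) ^ (n - r))
    have : P.natDegree ≤ n - 1 := by
      rw [hP]; exact le_trans this (max_le h1 h2)
    omega
  have hFd : ∀ t ∈ I, HasDerivAt F (P.eval t) t := by
    intro t ht; rw [hPeval]; exact hF t ht
  have hu' : ∀ t, u t = P.eval t / (k * F t + C 1) := by
    intro t; rw [hPeval]; exact hu t
  have key := chainR_eq_aux k I hIopen P F hFd (C 1) hden u hu'
  constructor
  · intro t ht
    rw [hu t]
    exact div_ne_zero (hT0 t ht) (hden t ht)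
  · intro t ht
    rw [key n t ht, Polynomial.iterate_derivative_eq_zero hdeg]
    simp
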